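/- arXiv:1402.0598 — 6 statements merged into one kernel-verified Lean document; each statement's English description precedes it below -/
import Mathlib

section
/- Let a, b be integers with gcd(a, b) = 1 and let G satisfy G(1) = a, G(2) = b, G(n+2) = G(n) + G(n+1). If a² + ab − b² ≢ 0 (mod 5), then G is complete mod 5: every residue mod 5 occurs among the G(n). If a² + ab − b² ≡ 0 (mod 5), then G is defective mod 5: no G(n) is divisible by 5. -/
/-! Reduce mod 5 and follow the pair `(G n, G (n + 1))` under the step `(x, y) ↦ (y, x + y)`.
The form `x² + xy − y²` only changes sign under the step. When it does not vanish mod 5, a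
finite check shows the orbit runs through every residue. When it vanishes, a zero first coordinate
forces the whole pair to vanish; the step being invertible, so would `(a, b)`, against
`gcd(a, b) = 1`. -/

namespace Gibonacci

variable {R : Type*} [CommRing R]

def step (p : R × R) : R × R := (p.2, p.1 + p.2)

def form (p : R × R) : R := p.1 ^ 2 + p.1 * p.2 - p.2 ^ 2

lemma step_injective : Function.Injective (step : R × R → R × R) := by
  rintro ⟨x, y⟩ ⟨x', y'⟩ h
  simp only [step, Prod.mk.injEq] at h
  obtain ⟨rfl, h⟩ := h
  simp_all

lemma step_zero : step (0 : R × R) = 0 := by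
  simp [step]

lemma form_step (p : R × R) : form (step p) = -form p := by
  simp only [form, step]
  ring

lemma form_iterate_step_eq_zero {p : R × R} (hp : form p = 0) (n : ℕ) :
    form (step^[n] p) = 0 := by
  induction n with
  | zero => exact hp
  | succ n ih => rw [Function.iterate_succ_apply', form_step, ih, neg_zero]

lemma eq_zero_of_form_eq_zero_of_fst_eq_zero [NoZeroDivisors R] {p : R × R}
    (hp : form p = 0) (h1 : p.1 = 0) : p = 0 := by
  simp only [form, h1, zero_pow two_ne_zero, zero_mul, zero_add, zero_sub, neg_eq_zero] at hp
  exact Prod.ext h1 (pow_eq_zero_iff two_ne_zero |>.mp hp)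

lemma fst_iterate_step_ne_zero [NoZeroDivisors R] {p : R × R} (hp : form p = 0) (hp0 : p ≠ 0)
    (n : ℕ) : (step^[n] p).1 ≠ 0 := fun h ↦ by
  have hzero := eq_zero_of_form_eq_zero_of_fst_eq_zero (form_iterate_step_eq_zero hp n) h
  rw [← Function.iterate_fixed (step_zero (R := R)) n] at hzero
  exact hp0 ((step_injective.iterate n) hzero)

lemma cast_iterate_step {G : ℕ → ℤ} (hrec : ∀ n ≥ 1, G (n + 2) = G n + G (n + 1))
    (n : ℕ) :
    ((G (n + 1) : R), (G (n + 2) : R)) = step^[n] ((G 1 : R), (G 2 : R)) := by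
  induction n with
  | zero => rfl
  | succ n ih =>
    rw [Function.iterate_succ_apply', ← ih, hrec (n + 1) (by omega)]
    simp only [step, Int.cast_add]

lemma exists_fst_iterate_step_eq_of_form_ne_zero :
    ∀ p : ZMod 5 × ZMod 5, form p ≠ 0 → ∀ r, ∃ n < 20, (step^[n] p).1 = r := by
  decide

end Gibonacci

open Gibonacci in
theorem gibonacci_mod_five_dichotomy
    (a b : ℤ) (hab : Int.gcd a b = 1)
    (G : ℕ → ℤ) (h1 : G 1 = a) (h2 : G 2 = b)
    (hrec : ∀ n ≥ 1, G (n + 2) = G n + G (n + 1)) :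
    (¬ (5 : ℤ) ∣ (a ^ 2 + a * b - b ^ 2) →
      ∀ r : ℤ, ∃ n ≥ 1, G n ≡ r [ZMOD 5]) ∧
    ((5 : ℤ) ∣ (a ^ 2 + a * b - b ^ 2) →
      ∀ n ≥ 1, ¬ (5 : ℤ) ∣ G n) := by
  set p : ZMod 5 × ZMod 5 := ((a : ZMod 5), (b : ZMod 5))
  have hG (n : ℕ) : (G (n + 1) : ZMod 5) = (step^[n] p).1 := by
    simpa [p, h1, h2] using congrArg Prod.fst (cast_iterate_step (R := ZMod 5) hrec n)
  have hform : form p = ((a ^ 2 + a * b - b ^ 2 : ℤ) : ZMod 5) := by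
    push_cast [form, p]; rfl
  refine ⟨fun hq r ↦ ?_, fun hq n hn hGn ↦ ?_⟩
  · have hq' : form p ≠ 0 := by rwa [hform, Ne, ZMod.intCast_zmod_eq_zero_iff_dvd]
    obtain ⟨n, -, hn⟩ := exists_fst_iterate_step_eq_of_form_ne_zero p hq' r
    exact ⟨n + 1, by omega, (ZMod.intCast_eq_intCast_iff _ _ 5).mp (by rw [hG, hn])⟩
  · have hp0 : p ≠ 0 := fun h ↦ by
      have h5 : (5 : ℤ) ∣ Int.gcd a b := Int.dvd_coe_gcd
        ((ZMod.intCast_zmod_eq_zero_iff_dvd a 5).mp (congrArg Prod.fst h))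
        ((ZMod.intCast_zmod_eq_zero_iff_dvd b 5).mp (congrArg Prod.snd h))
      rw [hab] at h5
      norm_num at h5
    obtain ⟨m, rfl⟩ : ∃ m, n = m + 1 := ⟨n - 1, by omega⟩
    have : Fact (Nat.Prime 5) := ⟨by norm_num⟩
    have hq' : form p = 0 := hform ▸ (ZMod.intCast_zmod_eq_zero_iff_dvd _ 5).mpr hq
    have hGm : (step^[m] p).1 = 0 := hG m ▸ (ZMod.intCast_zmod_eq_zero_iff_dvd _ 5).mpr hGn
    exact fst_iterate_step_ne_zero hq' hp0 m hGm
end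

section
/- Let m ≥ 1 and suppose the Fibonacci sequence is defective mod m (some residue mod m never occurs among Fibonacci numbers). Then every integer sequence G satisfying G(n+2) = G(n) + G(n+1) with gcd(G(1), G(2)) = 1 is also defective mod m. -/
/-!
Reduce mod `m`. If `G` never vanishes mod `m`, the residue `0` is missed. Otherwise let
`G k ≡ 0`; from there on `G (k + j) ≡ G (k + 1) * F j`, and `G (k + 1)` is a unit mod `m`
because consecutive terms stay coprime. The shift `(a, b) ↦ (b, a + b)` is a permutation of
the finite set `(ZMod m)²`, so `G` is periodic mod `m` and every value it takes is taken again
after index `k`. Hence `G` hits exactly `G (k + 1)` times the residues `F` hits, and misses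
`G (k + 1) * r` whenever `F` misses `r`.
-/

def IsGibonacci {R : Type*} [Add R] (u : ℕ → R) : Prop :=
  ∀ n ≥ 1, u (n + 2) = u n + u (n + 1)

def fibStep (R : Type*) [AddGroup R] : Equiv.Perm (R × R) where
  toFun x := (x.2, x.1 + x.2)
  invFun x := (x.2 - x.1, x.1)
  left_inv x := by simp
  right_inv x := by simp

namespace IsGibonacci

variable {R : Type*} {u : ℕ → R}

theorem map [Add R] {S F : Type*} [Add S] [FunLike F R S] [AddHomClass F R S]
    (hu : IsGibonacci u) (f : F) : IsGibonacci (f ∘ u) := fun n hn => by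
  simp only [Function.comp_apply, hu n hn, map_add]

theorem pair_eq_fibStep_pow [AddGroup R] (hu : IsGibonacci u) (n : ℕ) :
    (u (n + 1), u (n + 2)) = (fibStep R ^ n) (u 1, u 2) := by
  induction n with
  | zero => simp
  | succ n ih =>
    rw [pow_succ', Equiv.Perm.mul_apply, ← ih]
    simp [fibStep, hu (n + 1) (by omega)]

theorem exists_periodic [AddGroup R] [Finite R] (hu : IsGibonacci u) :
    ∃ p > 0, Function.Periodic (fun n => u (n + 1)) p := by
  refine ⟨orderOf (fibStep R), (isOfFinOrder_of_finite _).orderOf_pos, fun n => ?_⟩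
  have h := hu.pair_eq_fibStep_pow (n + orderOf (fibStep R))
  rw [pow_add, pow_orderOf_eq_one, mul_one, ← hu.pair_eq_fibStep_pow] at h
  exact congrArg Prod.fst h

theorem exists_ge_eq [AddGroup R] [Finite R] (hu : IsGibonacci u) {n : ℕ} (hn : 1 ≤ n)
    (N : ℕ) : ∃ n' ≥ N, u n' = u n := by
  obtain ⟨p, hp, hper⟩ := hu.exists_periodic
  refine ⟨n - 1 + N * p + 1, by nlinarith, ?_⟩
  simpa [Nat.sub_add_cancel hn] using hper.nat_mul N (n - 1)

theorem isCoprime [CommRing R] (hu : IsGibonacci u) (h : IsCoprime (u 1) (u 2)) {n : ℕ}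
    (hn : 1 ≤ n) : IsCoprime (u n) (u (n + 1)) := by
  induction n, hn using Nat.le_induction with
  | base => exact h
  | succ n hn ih => simpa [hu n hn] using ih.symm.add_mul_left_right 1

theorem eq_mul_of_eq_zero [Semiring R] (hu : IsGibonacci u) {f : ℕ → R} (hf : IsGibonacci f)
    (hf1 : f 1 = 1) (hf2 : f 2 = 1) {k : ℕ} (hk : 1 ≤ k) (hk0 : u k = 0) {j : ℕ}
    (hj : 1 ≤ j) : u (k + j) = u (k + 1) * f j := by
  suffices u (k + j) = u (k + 1) * f j ∧ u (k + j + 1) = u (k + 1) * f (j + 1) from this.1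
  induction j, hj using Nat.le_induction with
  | base => simp [hf1, hf2, hu k hk, hk0]
  | succ j hj ih =>
    refine ⟨ih.2, ?_⟩
    rw [show k + (j + 1) + 1 = k + j + 2 by ring, hu _ (by omega), hf j hj, ih.1, ih.2, mul_add]

end IsGibonacci

theorem fibonacci_defective_implies_gibonacci_defective
    (m : ℕ) (hm : 1 ≤ m)
    (F : ℕ → ℤ) (hF1 : F 1 = 1) (hF2 : F 2 = 1)
    (hFrec : ∀ n ≥ 1, F (n + 2) = F n + F (n + 1))
    (hdef : ∃ r : ℤ, ∀ n ≥ 1, ¬ F n ≡ r [ZMOD (m : ℤ)])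
    (G : ℕ → ℤ) (hab : Int.gcd (G 1) (G 2) = 1)
    (hrec : ∀ n ≥ 1, G (n + 2) = G n + G (n + 1)) :
    ∃ r : ℤ, ∀ n ≥ 1, ¬ G n ≡ r [ZMOD (m : ℤ)] := by
  have : NeZero m := ⟨by omega⟩
  have hg : IsGibonacci fun n => (G n : ZMod m) := IsGibonacci.map hrec (Int.castRingHom (ZMod m))
  have hf : IsGibonacci fun n => (F n : ZMod m) := IsGibonacci.map hFrec (Int.castRingHom (ZMod m))
  simp only [← ZMod.intCast_eq_intCast_iff]
  by_cases hz : ∀ n ≥ 1, (G n : ZMod m) ≠ 0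
  · exact ⟨0, fun n hn h => hz n hn (by simpa using h)⟩
  obtain ⟨k, hk, hk0⟩ : ∃ k ≥ 1, (G k : ZMod m) = 0 := by simpa using hz
  have hunit : IsUnit (G (k + 1) : ZMod m) := by
    have := (IsGibonacci.isCoprime hrec (Int.isCoprime_iff_gcd_eq_one.mpr hab) hk).map
      (Int.castRingHom (ZMod m))
    simpa [hk0, isCoprime_zero_left] using this
  obtain ⟨r, hr⟩ := hdef
  refine ⟨G (k + 1) * r, fun n hn hGn => ?_⟩
  obtain ⟨n', hn', hGn'⟩ := hg.exists_ge_eq hn (k + 1)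
  obtain ⟨j, rfl⟩ : ∃ j, n' = k + j := ⟨n' - k, by omega⟩
  have hGj := hg.eq_mul_of_eq_zero hf (by simp [hF1]) (by simp [hF2]) hk hk0 (by omega : 1 ≤ j)
  refine hr j (by omega) ((ZMod.intCast_eq_intCast_iff _ _ _).mp (hunit.mul_left_cancel ?_))
  rw [← hGj, hGn', hGn, Int.cast_mul]
end

section
/- Every integer sequence G with gcd(G(1), G(2)) = 1 satisfying G(n+2) = G(n) + G(n+1) is complete mod 3: every residue mod 3 occurs among the G(n). -/
/-! Modulo 3 a Gibonacci sequence is determined by `(a, b) = (G 1, G 2)`, with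
`G (n + 2) = fib n * a + fib (n + 1) * b`; coprimality makes `(a, b)` nonzero mod 3,
and for every nonzero pair the five terms `G 2, …, G 6` (that is `b, a + b, a + 2b, 2a, 2b`)
already hit every residue. -/

lemma intCast_ne_zero_or_of_gcd_eq_one {a b : ℤ} (h : Int.gcd a b = 1) {m : ℕ} (hm : m ≠ 1) :
    (a : ZMod m) ≠ 0 ∨ (b : ZMod m) ≠ 0 := by
  by_contra! hab
  simp only [ZMod.intCast_zmod_eq_zero_iff_dvd] at hab
  have hm_dvd : (m : ℤ) ∣ 1 := by simpa [h] using Int.dvd_coe_gcd hab.1 hab.2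
  exact hm (by exact_mod_cast Int.eq_one_of_dvd_one (Int.natCast_nonneg m) hm_dvd)

lemma eq_fib_mul_add_fib_mul {R : Type*} [CommSemiring R] (g : ℕ → R)
    (hrec : ∀ n ≥ 1, g (n + 2) = g n + g (n + 1)) (n : ℕ) :
    g (n + 2) = Nat.fib n * g 1 + Nat.fib (n + 1) * g 2 := by
  induction n using Nat.twoStepInduction with
  | zero => simp
  | one => simpa [add_comm] using hrec 1 le_rfl
  | more n ih₀ ih₁ =>
    rw [hrec (n + 2) (by omega), ih₀, show n + 2 + 1 = n + 1 + 2 from rfl, ih₁]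
    simp only [Nat.fib_add_two, Nat.cast_add]
    ring

lemma ZMod.exists_fib_mul_add_fib_mul_eq (a b r : ZMod 3) (hab : a ≠ 0 ∨ b ≠ 0) :
    ∃ n < 5, Nat.fib n * a + Nat.fib (n + 1) * b = r := by
  revert a b r
  decide

theorem gibonacci_complete_mod_3
    (G : ℕ → ℤ) (hab : Int.gcd (G 1) (G 2) = 1)
    (hrec : ∀ n ≥ 1, G (n + 2) = G n + G (n + 1)) :
    ∀ r : ℤ, ∃ n ≥ 1, G n ≡ r [ZMOD 3] := by
  intro r
  have hrec₃ : ∀ n ≥ 1, (G (n + 2) : ZMod 3) = G n + G (n + 1) := fun n hn => by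
    rw [hrec n hn, Int.cast_add]
  obtain ⟨n, -, hn⟩ := ZMod.exists_fib_mul_add_fib_mul_eq (G 1) (G 2) r
    (intCast_ne_zero_or_of_gcd_eq_one hab (by norm_num))
  refine ⟨n + 2, by omega, (ZMod.intCast_eq_intCast_iff _ _ 3).mp ?_⟩
  rw [eq_fib_mul_add_fib_mul (fun k => (G k : ZMod 3)) hrec₃ n, hn]
end

section
/- Every integer sequence G with gcd(G(1), G(2)) = 1 satisfying G(n+2) = G(n) + G(n+1) is complete mod 3^j for every j ≥ 1. -/
lemma fib_aux_gib (i : ℕ) : ∃ c d : ℕ,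
    Nat.fib (8 * 3 ^ i) = 3 ^ (i + 1) * c ∧
    Nat.fib (8 * 3 ^ i - 1) = 1 + 3 ^ (i + 1) * d ∧
    c % 3 = 1 ∧ d % 3 = 1 := by
  induction i with
  | zero => exact ⟨7, 4, by decide, by decide, rfl, rfl⟩
  | succ i ih =>
    obtain ⟨c, d, hx, hy, hc, hd⟩ := ih
    set q := 3 ^ i with hq
    have hq1 : 1 ≤ q := Nat.one_le_pow _ _ (by norm_num)
    obtain ⟨p, hp⟩ : ∃ p, 8 * 3 ^ i = p + 1 := ⟨8 * 3 ^ i - 1, by omega⟩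
    have hpow : (3:ℕ) ^ (i+1) = 3 * q := by rw [pow_succ]; ring
    have hpow2 : (3:ℕ) ^ (i+1+1) = 9 * q := by rw [pow_succ, pow_succ]; ring
    have hx' : Nat.fib (p+1) = 3 * q * c := by rw [← hp, hx, hpow]
    have hy' : Nat.fib p = 1 + 3 * q * d := by
      have h8 : 8 * 3 ^ i - 1 = p := by omega
      rw [← h8, hy, hpow]
    have hz : Nat.fib (p+2) = Nat.fib p + Nat.fib (p+1) := Nat.fib_add_two
    have e1 : Nat.fib (p+p+1) = Nat.fib p * Nat.fib p + Nat.fib (p+1) * Nat.fib (p+1) :=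
      Nat.fib_add p p
    have e2 : Nat.fib (p+(p+1)+1) = Nat.fib p * Nat.fib (p+1) + Nat.fib (p+1) * Nat.fib (p+2) :=
      Nat.fib_add p (p+1)
    have e3 : Nat.fib ((p+1)+(p+1)+1) = Nat.fib (p+1) * Nat.fib (p+1) + Nat.fib (p+2) * Nat.fib (p+2) :=
      Nat.fib_add (p+1) (p+1)
    have e4 : Nat.fib (p+(p+p+1)+1) = Nat.fib p * Nat.fib (p+p+1) + Nat.fib (p+1) * Nat.fib (p+p+2) :=
      Nat.fib_add p (p+p+1)
    have e5 : Nat.fib (p+(p+(p+1)+1)+1) = Nat.fib p * Nat.fib (p+(p+1)+1) + Nat.fib (p+1) * Nat.fib (p+(p+1)+2) :=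
      Nat.fib_add p (p+(p+1)+1)
    -- index normalizations
    have i1 : p+(p+1)+1 = p+p+2 := by omega
    have i2 : (p+1)+(p+1)+1 = p+(p+1)+2 := by omega
    have e2' : Nat.fib (p+p+2) = Nat.fib p * Nat.fib (p+1) + Nat.fib (p+1) * Nat.fib (p+2) := i1 ▸ e2
    have e3' : Nat.fib (p+(p+1)+2) = Nat.fib (p+1) * Nat.fib (p+1) + Nat.fib (p+2) * Nat.fib (p+2) := i2 ▸ e3
    refine ⟨c * (6*q^2*c^2 + 3*q*c*(1+3*q*d) + (1+3*q*d)^2),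
        3*q^2*c^3 + 3*q*c^2*(1+3*q*d) + d + 3*q*d^2 + 3*q^2*d^3, ?_, ?_, ?_, ?_⟩
    · have hidx : 8 * 3 ^ (i+1) = p+(p+(p+1)+1)+1 := by
        have : (3:ℕ)^(i+1) = 3 * 3^i := by rw [pow_succ]; ring
        omega
      rw [hidx, e5, e2, e3', hz, hx', hy', hpow2]; ring
    · have hidx : 8 * 3 ^ (i+1) - 1 = p+(p+p+1)+1 := by
        have : (3:ℕ)^(i+1) = 3 * 3^i := by rw [pow_succ]; ring
        omega
      rw [hidx, e4, e1, e2', hz, hx', hy', hpow2]; ring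
    · obtain ⟨c0, hc0⟩ : ∃ c0, c = 3*c0+1 := ⟨c/3, by omega⟩
      subst hc0
      have : (3*c0+1) * (6*q^2*(3*c0+1)^2 + 3*q*(3*c0+1)*(1+3*q*d) + (1+3*q*d)^2) =
          3 * ( (3*c0+1) * (2*q^2*(3*c0+1)^2 + q*(3*c0+1)*(1+3*q*d) + 2*q*d + 3*q^2*d^2) + c0) + 1 := by
        ring
      omega
    · obtain ⟨d0, hd0⟩ : ∃ d0, d = 3*d0+1 := ⟨d/3, by omega⟩
      subst hd0
      have : 3*q^2*c^3 + 3*q*c^2*(1+3*q*(3*d0+1)) + (3*d0+1) + 3*q*(3*d0+1)^2 + 3*q^2*(3*d0+1)^3 =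
          3 * (q^2*c^3 + q*c^2*(1+3*q*(3*d0+1)) + d0 + q*(3*d0+1)^2 + q^2*(3*d0+1)^3) + 1 := by
        ring
      omega

lemma base3_gib : ∀ s : ZMod 3 × ZMod 3, s ≠ 0 → ∀ r : ZMod 3,
    ∃ k < 8, ((fun p : ZMod 3 × ZMod 3 => (p.2, p.1 + p.2))^[k] s).1 = r ∧
      ((fun p : ZMod 3 × ZMod 3 => (p.2, p.1 + p.2))^[k] s).1 +
      ((fun p : ZMod 3 × ZMod 3 => (p.2, p.1 + p.2))^[k] s).2 ≠ 0 := by decide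

theorem gibonacci_complete_mod_three_pow
    (G : ℕ → ℤ) (hab : Int.gcd (G 1) (G 2) = 1)
    (hrec : ∀ n ≥ 1, G (n + 2) = G n + G (n + 1)) :
    ∀ j : ℕ, 1 ≤ j → ∀ r : ℤ, ∃ n ≥ 1, G n ≡ r [ZMOD ((3 : ℤ) ^ j)] := by
  haveI : Fact (Nat.Prime 3) := ⟨by norm_num⟩
  -- the shift formula
  have key : ∀ n, 1 ≤ n → ∀ m : ℕ,
      (G (n + m + 1) = (Nat.fib m : ℤ) * G n + (Nat.fib (m+1) : ℤ) * G (n+1)) ∧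
      (G (n + m + 2) = (Nat.fib (m+1) : ℤ) * G n + (Nat.fib (m+2) : ℤ) * G (n+1)) := by
    intro n hn m
    induction m with
    | zero =>
      constructor
      · simp
      · have := hrec n hn
        simp [this]
    | succ m ih =>
      refine ⟨ih.2, ?_⟩
      have h3 := hrec (n + m + 1) (by omega)
      have hi : n + m + 1 + 2 = n + (m+1) + 2 := by omega
      rw [hi] at h3
      have hg2 : G (n + m + 1 + 1) = (Nat.fib (m+1) : ℤ) * G n + (Nat.fib (m+2) : ℤ) * G (n+1) := ih.2
      have hfib : (Nat.fib (m+1+2) : ℤ) = (Nat.fib (m+1) : ℤ) + (Nat.fib (m+2) : ℤ) := by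
        have h := Nat.fib_add_two (n := m+1)
        have h2 : m + 1 + 1 = m + 2 := by omega
        rw [h2] at h
        exact_mod_cast h
      have hfib2 : (Nat.fib (m+2) : ℤ) = (Nat.fib m : ℤ) + (Nat.fib (m+1) : ℤ) := by
        exact_mod_cast Nat.fib_add_two (n := m)
      rw [h3, ih.1, hg2, hfib, hfib2]
      ring
  have orbit : ∀ k : ℕ, (((G (1+k) : ℤ) : ZMod 3), ((G (2+k) : ℤ) : ZMod 3)) =
      (fun p : ZMod 3 × ZMod 3 => (p.2, p.1 + p.2))^[k] (((G 1 : ℤ) : ZMod 3), ((G 2 : ℤ) : ZMod 3)) := by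
    intro k
    induction k with
    | zero => rfl
    | succ k ih =>
      rw [Function.iterate_succ_apply', ← ih]
      have h := hrec (1+k) (by omega)
      have hi : 1 + k + 2 = 2 + (k+1) := by omega
      rw [hi] at h
      have hi2 : 1 + k + 1 = 2 + k := by omega
      rw [hi2] at h
      have hi3 : 1 + (k+1) = 2 + k := by omega
      rw [hi3, h]
      push_cast
      rfl
  have hstart : (((G 1 : ℤ) : ZMod 3), ((G 2 : ℤ) : ZMod 3)) ≠ (0 : ZMod 3 × ZMod 3) := by
    intro h
    rw [Prod.ext_iff] at h
    obtain ⟨h1, h2⟩ := h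
    have d1 : ((3:ℕ):ℤ) ∣ G 1 := (ZMod.intCast_zmod_eq_zero_iff_dvd _ 3).mp h1
    have d2 : ((3:ℕ):ℤ) ∣ G 2 := (ZMod.intCast_zmod_eq_zero_iff_dvd _ 3).mp h2
    have hcop : IsCoprime (G 1) (G 2) := Int.isCoprime_iff_gcd_eq_one.mpr hab
    have := hcop.isUnit_of_dvd' d1 d2
    rw [Int.isUnit_iff] at this
    omega
  -- the strengthened statement, by induction on j
  have main : ∀ j : ℕ, 1 ≤ j → ∀ r : ℤ, ∃ n, 1 ≤ n ∧ (G n ≡ r [ZMOD ((3:ℤ) ^ j)]) ∧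
      ¬ ((3:ℤ) ∣ G (n + 2)) := by
    intro j hj
    induction j, hj using Nat.le_induction with
    | base =>
      intro r
      obtain ⟨k, -, hk1, hk2⟩ := base3_gib _ hstart ((r : ℤ) : ZMod 3)
      rw [← orbit k] at hk1 hk2
      refine ⟨1 + k, by omega, ?_, ?_⟩
      · have h0 := (ZMod.intCast_eq_intCast_iff (G (1+k)) r 3).mp hk1
        have h3 : ((3:ℕ):ℤ) = (3:ℤ)^1 := by norm_num
        rwa [h3] at h0
      · intro hdvd
        have h := hrec (1+k) (by omega)
        have h0 : ((G (1+k+2) : ℤ) : ZMod 3) = 0 := by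
          have h3 : ((3:ℕ):ℤ) ∣ G (1+k+2) := by exact_mod_cast hdvd
          exact (ZMod.intCast_zmod_eq_zero_iff_dvd _ 3).mpr h3
        rw [h] at h0
        push_cast at h0
        have hi : 1 + k + 1 = 2 + k := by omega
        rw [hi] at h0
        exact hk2 h0
    | succ j hj ih =>
      -- Fibonacci data
      obtain ⟨c, d, hfx, hfy, hc, hd⟩ := fib_aux_gib (j-1)
      have hj1 : j - 1 + 1 = j := by omega
      rw [hj1] at hfx hfy
      set π := 8 * 3 ^ (j-1) with hπ
      have hπ8 : 8 ≤ π := by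
        have : 1 ≤ (3:ℕ)^(j-1) := Nat.one_le_pow _ _ (by norm_num)
        omega
      obtain ⟨c0, hc0⟩ : ∃ c0, c = 3*c0+1 := ⟨c/3, by omega⟩
      obtain ⟨d0, hd0⟩ : ∃ d0, d = 3*d0+1 := ⟨d/3, by omega⟩
      have hjj : (3:ℤ)^j = 3 * 3^(j-1) := by
        conv_lhs => rw [show j = (j-1) + 1 by omega]
        rw [pow_succ]; ring
      -- one-step lemma
      have S : ∀ n, 1 ≤ n → G (n + π) ≡ G n + 3^j * G (n+2) [ZMOD ((3:ℤ)^(j+1))] := by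
        intro n hn
        have hk := (key n hn (π - 1)).1
        have hi : n + (π-1) + 1 = n + π := by omega
        have hi2 : π - 1 + 1 = π := by omega
        rw [hi, hi2, hfy, hfx] at hk
        rw [Int.modEq_iff_dvd]
        have hr := hrec n hn
        refine ⟨-(((d0:ℤ)) * G n + (c0:ℤ) * G (n+1)), ?_⟩
        rw [hk, hr]
        push_cast [hc0, hd0]
        ring
      -- iterated step
      have T : ∀ t : ℕ, ∀ n, 1 ≤ n →
          G (n + t * π) ≡ G n + (t:ℤ) * 3^j * G (n+2) [ZMOD ((3:ℤ)^(j+1))] := by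
        intro t
        induction t with
        | zero => intro n hn; simp
        | succ t ih' =>
          intro n hn
          have h1 : G (n + (t+1) * π) ≡ G (n + π) + (t:ℤ) * 3^j * G ((n + π) + 2) [ZMOD ((3:ℤ)^(j+1))] := by
            have h := ih' (n + π) (by omega)
            have hi : n + π + t * π = n + (t+1)*π := by ring_nf
            rwa [hi] at h
          have h2 := S n hn
          have h3 : G ((n + π) + 2) ≡ G (n+2) [ZMOD (3:ℤ)] := by
            have hS := S (n+2) (by omega)
            have hi : n + 2 + π = n + π + 2 := by omega
            rw [hi] at hS
            have h5 := hS.of_dvd (dvd_pow_self (3:ℤ) (by omega : j+1 ≠ 0))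
            refine h5.trans ?_
            rw [Int.modEq_iff_dvd]
            refine ⟨-(3^(j-1) * G (n+2+2)), ?_⟩
            rw [hjj]; ring
          have h4 : (t:ℤ) * 3^j * G ((n+π)+2) ≡ (t:ℤ) * 3^j * G (n+2) [ZMOD ((3:ℤ)^(j+1))] := by
            rw [Int.modEq_iff_dvd]
            obtain ⟨w, hw⟩ := h3.dvd
            refine ⟨(t:ℤ) * w, ?_⟩
            linear_combination ((t:ℤ) * 3^j) * hw
          refine (h1.trans (h2.add h4)).trans ?_
          have heq : G n + 3^j * G (n+2) + (t:ℤ)*3^j*G (n+2) = G n + (((t:ℕ)+1 : ℕ):ℤ)*3^j*G (n+2) := by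
            push_cast; ring
          rw [heq]
      -- assemble
      intro r
      obtain ⟨n, hn, h1, h2⟩ := ih r
      obtain ⟨s, hs⟩ := h1.dvd
      have hg0 : ((G (n+2) : ℤ) : ZMod 3) ≠ 0 := by
        intro h
        exact h2 (by exact_mod_cast (ZMod.intCast_zmod_eq_zero_iff_dvd _ 3).mp h)
      set u : ZMod 3 := ((s : ℤ) : ZMod 3) * ((G (n+2) : ℤ) : ZMod 3)⁻¹ with hu
      set t := u.val with ht
      have htc : ((t : ℕ) : ZMod 3) = u := ZMod.natCast_rightInverse u
      have hts : (3:ℤ) ∣ s - (t:ℤ) * G (n+2) := by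
        have hz : ((s - (t:ℤ)*G (n+2) : ℤ) : ZMod 3) = 0 := by
          push_cast
          rw [htc, hu, mul_assoc, inv_mul_cancel₀ hg0, mul_one]
          ring
        exact_mod_cast (ZMod.intCast_zmod_eq_zero_iff_dvd _ 3).mp hz
      obtain ⟨w, hw⟩ := hts
      refine ⟨n + t*π, by omega, ?_, ?_⟩
      · refine (T t n hn).trans ?_
        rw [Int.modEq_iff_dvd]
        refine ⟨w, ?_⟩
        have hp2 : (3:ℤ)^(j+1) = 3^j * 3 := by ring
        rw [hp2]
        linear_combination hs + (3:ℤ)^j * hw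
      · intro hdvd
        have hT := T t (n+2) (by omega)
        have hi : n + 2 + t*π = n + t*π + 2 := by omega
        rw [hi] at hT
        have h5 := hT.of_dvd (dvd_pow_self (3:ℤ) (by omega : j+1 ≠ 0))
        apply h2
        obtain ⟨w1, hw1⟩ := h5.dvd
        obtain ⟨w2, hw2⟩ := hdvd
        refine ⟨w1 + w2 - (t:ℤ)*3^(j-1)*G (n+2+2), ?_⟩
        linear_combination hw1 + hw2 - (t:ℤ)*G (n+2+2)*hjj
  intro j hj r
  obtain ⟨n, hn, h1, -⟩ := main j hj r
  exact ⟨n, hn, h1⟩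
end

section
/- Every integer sequence G with gcd(G(1), G(2)) = 1 satisfying G(n+2) = G(n) + G(n+1) is complete mod 4: every residue mod 4 occurs among the G(n). -/
/-!
Reduced mod 4, the sequence is determined by its first two terms, which are coprime in `ZMod 4`
because they are coprime in `ℤ`. A check of the sixteen pairs shows that every coprime pair of
residues produces all four residues within the first six terms.
-/

def gibonacci {M : Type*} [Add M] (a b : M) : ℕ → M
  | 0 => a
  | 1 => b
  | n + 2 => gibonacci a b n + gibonacci a b (n + 1)

theorem eq_gibonacci {M : Type*} [Add M] {f : ℕ → M} (hf : ∀ n, f (n + 2) = f n + f (n + 1)) :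
    ∀ n, f n = gibonacci (f 0) (f 1) n
  | 0 => rfl
  | 1 => rfl
  | n + 2 => by rw [hf, gibonacci, eq_gibonacci hf n, eq_gibonacci hf (n + 1)]

theorem exists_lt_six_gibonacci_eq_of_isCoprime :
    ∀ a b : ZMod 4, IsCoprime a b → ∀ r, ∃ n < 6, gibonacci a b n = r := by
  unfold IsCoprime
  decide

theorem gibonacci_complete_mod_4
    (G : ℕ → ℤ) (hab : Int.gcd (G 1) (G 2) = 1)
    (hrec : ∀ n ≥ 1, G (n + 2) = G n + G (n + 1)) :
    ∀ r : ℤ, ∃ n ≥ 1, G n ≡ r [ZMOD 4] := by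
  intro r
  set f : ℕ → ZMod 4 := fun n => G (n + 1) with hf_def
  have hf : ∀ n, f (n + 2) = f n + f (n + 1) := fun n => by
    simp only [hf_def, ← Int.cast_add, ← hrec (n + 1) (Nat.le_add_left 1 n)]
  have hcop : IsCoprime (f 0) (f 1) :=
    (Int.isCoprime_iff_gcd_eq_one.mpr hab).map (Int.castRingHom (ZMod 4))
  obtain ⟨n, -, hn⟩ := exists_lt_six_gibonacci_eq_of_isCoprime (f 0) (f 1) hcop r
  refine ⟨n + 1, Nat.le_add_left 1 n, (ZMod.intCast_eq_intCast_iff _ _ _).mp ?_⟩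
  rw [← hn, ← eq_gibonacci hf]
end

section
/- Every integer sequence G with gcd(G(1), G(2)) = 1 satisfying G(n+2) = G(n) + G(n+1) is complete mod 6: every residue mod 6 occurs among the G(n). -/
/-! Reduce the sequence mod 6 and follow the pair of consecutive residues, which moves by
`(a, b) ↦ (b, a + b)`. Coprimality of `G 1` and `G 2` survives the reduction as coprimality in
`ZMod 6`, and a finite check shows that every coprime pair in `ZMod 6` lies on a single cycle of
length 24 which passes through every residue. -/

def gibStep {R : Type*} [Add R] (p : R × R) : R × R := (p.2, p.1 + p.2)

theorem iterate_gibStep {R : Type*} [Add R] (f : ℕ → R)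
    (hrec : ∀ n ≥ 1, f (n + 2) = f n + f (n + 1)) (n : ℕ) :
    gibStep^[n] (f 1, f 2) = (f (n + 1), f (n + 2)) := by
  induction n with
  | zero => rfl
  | succ n ih => rw [Function.iterate_succ_apply', ih, gibStep, hrec (n + 1) (by omega)]

theorem ZMod.exists_iterate_gibStep_fst_eq_of_isCoprime :
    ∀ a b : ZMod 6, IsCoprime a b → ∀ r : ZMod 6, ∃ k < 24, (gibStep^[k] (a, b)).1 = r := by
  unfold IsCoprime
  decide

theorem gibonacci_complete_mod_6
    (G : ℕ → ℤ) (hab : Int.gcd (G 1) (G 2) = 1)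
    (hrec : ∀ n ≥ 1, G (n + 2) = G n + G (n + 1)) :
    ∀ r : ℤ, ∃ n ≥ 1, G n ≡ r [ZMOD 6] := by
  intro r
  have hcop : IsCoprime (G 1 : ZMod 6) (G 2) :=
    (Int.isCoprime_iff_gcd_eq_one.mpr hab).map (Int.castRingHom (ZMod 6))
  have hrec6 : ∀ n ≥ 1, (G (n + 2) : ZMod 6) = G n + G (n + 1) := fun n hn => by
    rw [hrec n hn, Int.cast_add]
  obtain ⟨k, -, hk⟩ := ZMod.exists_iterate_gibStep_fst_eq_of_isCoprime _ _ hcop r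
  rw [iterate_gibStep (fun n => (G n : ZMod 6)) hrec6 k] at hk
  exact ⟨k + 1, by omega, (ZMod.intCast_eq_intCast_iff _ _ 6).mp hk⟩
end
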